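/- Let 1 ≤ p < ∞ and let μ be any measure. Then L_p(μ) has the metric π-property: for every ε > 0 and every finite set {f₁,…,fₙ} ⊆ S_{L_p(μ)} there exist finitely many pairwise disjoint measurable sets A₁,…,A_m of finite positive measure such that the conditional-expectation-type operator P(f) = ∑ⱼ (1/μ(Aⱼ)) (∫_{Aⱼ} f dμ) χ_{Aⱼ} is a norm-one projection onto the finite-dimensional subspace M = span{χ_{A₁},…,χ_{A_m}}, and each fᵢ is within ε of some element of M. -/

import Mathlib

/-!
Approximate the vector `(f₁, …, fₙ)` in `L_p(μ; ℝⁿ)` by a single simple function `T`. The sets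
`Aⱼ` are the level sets `T⁻¹{v}` with `v ≠ 0` and positive measure; they are disjoint, of finite
measure, and every coordinate of `T` is a.e. a combination of their indicators. The averaging
operator `P` fixes these indicators, so it is a projection onto their span, and it is a contraction
of `L_p`: on each `Aⱼ` it is the conditional expectation of `μ|Aⱼ` with respect to the trivial
σ-algebra, and `‖P g‖ₚᵖ = ∑ⱼ ‖P g‖ᵖ_{p, Aⱼ} ≤ ∑ⱼ ‖g‖ᵖ_{p, Aⱼ} ≤ ‖g‖ₚᵖ`.
-/
noncomputable section
open scoped ENNReal
open MeasureTheory

theorem Pairwise.sum_indicator_apply_of_mem {α ι M : Type*} [Fintype ι] [AddCommMonoid M]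
    {A : ι → Set α} (hd : Pairwise (Function.onFun Disjoint A)) (c : ι → α → M) {k : ι} {x : α}
    (hx : x ∈ A k) : ∑ j, (A j).indicator (c j) x = c k x := by
  rw [Finset.sum_eq_single_of_mem k (Finset.mem_univ k) fun j _ hjk ↦
    Set.indicator_of_notMem (Set.disjoint_right.mp (hd hjk) hx) _, Set.indicator_of_mem hx]

theorem pos_of_norm_sub_lt_one_of_mem_span_range {E : Type*} [NormedAddCommGroup E]
    [NormedSpace ℝ E] {m : ℕ} {v : Fin m → E} {x g : E} (hx : ‖x‖ = 1)
    (hg : g ∈ Submodule.span ℝ (Set.range v)) (hlt : ‖x - g‖ < 1) : 0 < m := by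
  refine Nat.pos_of_ne_zero fun hm ↦ ?_
  subst hm
  rw [Set.range_eq_empty, Submodule.span_empty, Submodule.mem_bot] at hg
  rw [hg, sub_zero, hx] at hlt
  exact hlt.false

namespace MeasureTheory

variable {α : Type*} [MeasurableSpace α] {μ : Measure α} {p : ℝ≥0∞}

theorem eLpNorm_const_setAverage_le {E : Type*} [NormedAddCommGroup E] [NormedSpace ℝ E]
    [CompleteSpace E] (hp : 1 ≤ p) (f : α → E) (s : Set α) :
    eLpNorm (fun _ ↦ ⨍ x in s, f x ∂μ) p (μ.restrict s) ≤ eLpNorm f p (μ.restrict s) := by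
  rcases eq_zero_or_neZero (μ.restrict s) with h | _
  · simp [h]
  · have := eLpNorm_condExp_le_eLpNorm (m := ⊥) (μ := μ.restrict s) f hp
    rw [condExp_bot'] at this
    simpa only [average_eq] using this

theorem enorm_setAverage_rpow_mul_measure_le {E : Type*} [NormedAddCommGroup E]
    [NormedSpace ℝ E] [CompleteSpace E] (hp : 1 ≤ p) (hp' : p ≠ ∞) (f : α → E) (s : Set α) :
    ‖⨍ x in s, f x ∂μ‖ₑ ^ p.toReal * μ s ≤ ∫⁻ x in s, ‖f x‖ₑ ^ p.toReal ∂μ := by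
  have hp0 : p ≠ 0 := (zero_lt_one.trans_le hp).ne'
  have hq : 0 < p.toReal := ENNReal.toReal_pos hp0 hp'
  have := eLpNorm_const_setAverage_le hp f s (μ := μ)
  rw [eLpNorm_eq_eLpNorm' hp0 hp', eLpNorm_eq_eLpNorm' hp0 hp'] at this
  rw [← setLIntegral_const, lintegral_rpow_enorm_eq_rpow_eLpNorm' hq,
    lintegral_rpow_enorm_eq_rpow_eLpNorm' hq]
  gcongr

section IndicatorCombination

variable {ι : Type*} [Fintype ι] {A : ι → Set α} (hA : ∀ j, MeasurableSet (A j))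
  (hμA : ∀ j, μ (A j) ≠ ∞)

theorem coeFn_sum_smul_indicatorConstLp (c : ι → ℝ) :
    ⇑(∑ j, c j • indicatorConstLp p (hA j) (hμA j) (1 : ℝ))
      =ᵐ[μ] fun x ↦ ∑ j, (A j).indicator (fun _ ↦ c j) x := by
  have hterm : ∀ j, ⇑(c j • indicatorConstLp p (hA j) (hμA j) (1 : ℝ))
      =ᵐ[μ] (A j).indicator fun _ ↦ c j := fun j ↦ by
    filter_upwards [Lp.coeFn_smul (c j) (indicatorConstLp p (hA j) (hμA j) (1 : ℝ)),
      indicatorConstLp_coeFn (hs := hA j) (hμs := hμA j) (c := (1 : ℝ))] with x hsmul hind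
    rw [hsmul, Pi.smul_apply, hind, ← Set.indicator_const_smul_apply, smul_eq_mul, mul_one]
  filter_upwards [Lp.coeFn_fun_finsetSum Finset.univ
    fun j ↦ c j • indicatorConstLp p (hA j) (hμA j) (1 : ℝ), ae_all_iff.mpr hterm] with x hsum hj
  rw [hsum]
  exact Finset.sum_congr rfl fun j _ ↦ hj j

theorem setAverage_sum_smul_indicatorConstLp (hd : Pairwise (Function.onFun Disjoint A))
    {j : ι} (h0 : μ (A j) ≠ 0) (c : ι → ℝ) :
    ⨍ x in A j, (∑ k, c k • indicatorConstLp p (hA k) (hμA k) (1 : ℝ)) x ∂μ = c j := by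
  rw [setAverage_congr_fun (hA j) ((coeFn_sum_smul_indicatorConstLp hA hμA c).mono
    fun x hx hxA ↦ hx.trans (hd.sum_indicator_apply_of_mem _ hxA))]
  exact setAverage_const h0 (hμA j) (c j)

theorem norm_sum_setAverage_smul_indicatorConstLp_le [Fact (1 ≤ p)] (hp : p ≠ ∞)
    (hd : Pairwise (Function.onFun Disjoint A)) (g : Lp ℝ p μ) :
    ‖∑ j, (⨍ x in A j, g x ∂μ) • indicatorConstLp p (hA j) (hμA j) (1 : ℝ)‖ ≤ ‖g‖ := by
  have hp1 : 1 ≤ p := Fact.out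
  have hp0 : p ≠ 0 := (zero_lt_one.trans_le hp1).ne'
  have hq : 0 < p.toReal := ENNReal.toReal_pos hp0 hp
  set c : ι → ℝ := fun j ↦ ⨍ x in A j, g x ∂μ
  set h : α → ℝ := fun x ↦ ∑ j, (A j).indicator (fun _ ↦ c j) x
  have hsupp : (fun x ↦ ‖h x‖ₑ ^ p.toReal).support ⊆ ⋃ j, A j := by
    refine Function.support_subset_iff'.mpr fun x hx ↦ ?_
    simp only [Set.mem_iUnion, not_exists] at hx
    simp [h, Set.indicator_of_notMem (hx _), ENNReal.zero_rpow_of_pos hq]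
  have hpow : ∫⁻ x, ‖h x‖ₑ ^ p.toReal ∂μ ≤ ∫⁻ x, ‖g x‖ₑ ^ p.toReal ∂μ := calc
    ∫⁻ x, ‖h x‖ₑ ^ p.toReal ∂μ = ∫⁻ x in ⋃ j, A j, ‖h x‖ₑ ^ p.toReal ∂μ :=
      (setLIntegral_eq_of_support_subset hsupp).symm
    _ = ∑ j, ‖c j‖ₑ ^ p.toReal * μ (A j) := by
      rw [lintegral_iUnion hA hd, tsum_fintype]
      refine Finset.sum_congr rfl fun j _ ↦ ?_
      rw [← setLIntegral_const]
      exact setLIntegral_congr_fun (hA j) fun x hx ↦ by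
        simp only [h, hd.sum_indicator_apply_of_mem _ hx]
    _ ≤ ∑ j, ∫⁻ x in A j, ‖g x‖ₑ ^ p.toReal ∂μ := by
      gcongr with j
      exact enorm_setAverage_rpow_mul_measure_le hp1 hp _ _
    _ = ∫⁻ x in ⋃ j, A j, ‖g x‖ₑ ^ p.toReal ∂μ := by rw [lintegral_iUnion hA hd, tsum_fintype]
    _ ≤ ∫⁻ x, ‖g x‖ₑ ^ p.toReal ∂μ := setLIntegral_le_lintegral _ _
  rw [Lp.norm_def, Lp.norm_def, eLpNorm_congr_ae (coeFn_sum_smul_indicatorConstLp hA hμA c)]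
  refine ENNReal.toReal_mono (Lp.eLpNorm_ne_top g) ?_
  rw [eLpNorm_eq_lintegral_rpow_enorm_toReal hp0 hp, eLpNorm_eq_lintegral_rpow_enorm_toReal hp0 hp]
  gcongr

end IndicatorCombination

namespace Lp

variable [Fact (1 ≤ p)]

theorem integrableOn_of_measure_ne_top (g : Lp ℝ p μ) {s : Set α} (hs : μ s ≠ ∞) :
    IntegrableOn g s μ :=
  have := isFiniteMeasure_restrict.mpr hs
  ((Lp.memLp g).restrict s).integrable Fact.out

def setAverageₗ (s : Set α) (hs : μ s ≠ ∞) : Lp ℝ p μ →ₗ[ℝ] ℝ where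
  toFun g := ⨍ x in s, g x ∂μ
  map_add' g h := by
    rw [setAverage_eq, setAverage_eq, setAverage_eq, ← smul_add,
      ← integral_add (integrableOn_of_measure_ne_top g hs) (integrableOn_of_measure_ne_top h hs)]
    congr 1
    exact integral_congr_ae (ae_restrict_of_ae (Lp.coeFn_add g h))
  map_smul' r g := by
    rw [RingHom.id_apply, setAverage_eq, setAverage_eq, smul_comm r, ← integral_smul r]
    congr 1
    exact integral_congr_ae (ae_restrict_of_ae (Lp.coeFn_smul r g))

theorem setAverageₗ_apply {s : Set α} (hs : μ s ≠ ∞) (g : Lp ℝ p μ) :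
    setAverageₗ s hs g = ⨍ x in s, g x ∂μ :=
  rfl

variable {ι : Type*} [Fintype ι] {A : ι → Set α} (hA : ∀ j, MeasurableSet (A j))
  (hμA : ∀ j, μ (A j) ≠ ∞)

def averagingₗ : Lp ℝ p μ →ₗ[ℝ] Lp ℝ p μ :=
  ∑ j, (setAverageₗ (A j) (hμA j)).smulRight (indicatorConstLp p (hA j) (hμA j) (1 : ℝ))

theorem averagingₗ_apply (g : Lp ℝ p μ) :
    averagingₗ hA hμA g =
      ∑ j, (⨍ x in A j, g x ∂μ) • indicatorConstLp p (hA j) (hμA j) (1 : ℝ) := by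
  simp [averagingₗ, setAverageₗ_apply]

theorem averagingₗ_mem_span (g : Lp ℝ p μ) :
    averagingₗ hA hμA g ∈
      Submodule.span ℝ (Set.range fun j ↦ indicatorConstLp p (hA j) (hμA j) (1 : ℝ)) := by
  rw [averagingₗ_apply]
  exact Submodule.sum_mem _ fun j _ ↦ Submodule.smul_mem _ _ (Submodule.subset_span ⟨j, rfl⟩)

theorem averagingₗ_of_mem_span (hd : Pairwise (Function.onFun Disjoint A))
    (h0 : ∀ j, μ (A j) ≠ 0) {g : Lp ℝ p μ}
    (hg : g ∈ Submodule.span ℝ (Set.range fun j ↦ indicatorConstLp p (hA j) (hμA j) (1 : ℝ))) :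
    averagingₗ hA hμA g = g := by
  obtain ⟨c, rfl⟩ := (Submodule.mem_span_range_iff_exists_fun ℝ).mp hg
  simp only [averagingₗ_apply, setAverage_sum_smul_indicatorConstLp hA hμA hd (h0 _)]

theorem range_averagingₗ (hd : Pairwise (Function.onFun Disjoint A)) (h0 : ∀ j, μ (A j) ≠ 0) :
    LinearMap.range (averagingₗ hA hμA) =
      Submodule.span ℝ (Set.range fun j ↦ indicatorConstLp p (hA j) (hμA j) (1 : ℝ)) := by
  refine le_antisymm ?_ fun g hg ↦ ⟨g, averagingₗ_of_mem_span hA hμA hd h0 hg⟩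
  rintro _ ⟨g, rfl⟩
  exact averagingₗ_mem_span hA hμA g

def averaging (hp : p ≠ ∞) (hd : Pairwise (Function.onFun Disjoint A)) :
    Lp ℝ p μ →L[ℝ] Lp ℝ p μ :=
  (averagingₗ hA hμA).mkContinuous 1 fun g ↦ by
    rw [one_mul, averagingₗ_apply]
    exact norm_sum_setAverage_smul_indicatorConstLp_le hA hμA hp hd g

variable (hp : p ≠ ∞) (hd : Pairwise (Function.onFun Disjoint A))

theorem averaging_apply (g : Lp ℝ p μ) :
    averaging hA hμA hp hd g =
      ∑ j, (⨍ x in A j, g x ∂μ) • indicatorConstLp p (hA j) (hμA j) (1 : ℝ) :=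
  averagingₗ_apply hA hμA g

theorem isIdempotentElem_averaging (h0 : ∀ j, μ (A j) ≠ 0) :
    IsIdempotentElem (averaging hA hμA hp hd) :=
  ContinuousLinearMap.ext fun g ↦
    averagingₗ_of_mem_span hA hμA hd h0 (averagingₗ_mem_span hA hμA g)

theorem range_averaging (h0 : ∀ j, μ (A j) ≠ 0) :
    LinearMap.range (averaging hA hμA hp hd : Lp ℝ p μ →ₗ[ℝ] Lp ℝ p μ) =
      Submodule.span ℝ (Set.range fun j ↦ indicatorConstLp p (hA j) (hμA j) (1 : ℝ)) :=
  range_averagingₗ hA hμA hd h0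

theorem norm_averaging [Nonempty ι] (h0 : ∀ j, μ (A j) ≠ 0) : ‖averaging hA hμA hp hd‖ = 1 := by
  have hp0 : p ≠ 0 := (zero_lt_one.trans_le Fact.out).ne'
  obtain ⟨j⟩ := ‹Nonempty ι›
  set e := indicatorConstLp p (hA j) (hμA j) (1 : ℝ)
  have he : 0 < ‖e‖ := by
    rw [norm_indicatorConstLp hp0 hp, norm_one, one_mul]
    exact Real.rpow_pos_of_pos (ENNReal.toReal_pos (h0 j) (hμA j)) _
  have hPe : averaging hA hμA hp hd e = e :=
    averagingₗ_of_mem_span hA hμA hd h0 (Submodule.subset_span ⟨j, rfl⟩)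
  refine le_antisymm (LinearMap.mkContinuous_norm_le _ zero_le_one _) ?_
  simpa [hPe, he] using (averaging hA hμA hp hd).le_opNorm e

end Lp

namespace SimpleFunc

theorem ae_measure_preimage_singleton_ne_zero {β : Type*} (T : SimpleFunc α β) :
    ∀ᵐ x ∂μ, μ (T ⁻¹' {T x}) ≠ 0 := by
  classical
  have hnull : μ (⋃ v ∈ T.range.filter fun v ↦ μ (T ⁻¹' {v}) = 0, T ⁻¹' {v}) = 0 :=
    (measure_biUnion_null_iff (Finset.countable_toSet _)).mpr fun v hv ↦
      (Finset.mem_filter.mp hv).2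
  refine measure_mono_null (fun x hx ↦ ?_) hnull
  exact Set.mem_biUnion (Finset.mem_filter.mpr ⟨T.mem_range_self x, not_not.mp hx⟩) rfl

theorem exists_ae_eq_comp_mem_span_indicatorConstLp {E : Type*} [NormedAddCommGroup E]
    (T : SimpleFunc α E) (hT : MemLp T p μ) (hp0 : p ≠ 0) (hp : p ≠ ∞) :
    ∃ (m : ℕ) (A : Fin m → Set α) (hA : ∀ j, MeasurableSet (A j)) (hμA : ∀ j, μ (A j) ≠ ∞),
      Pairwise (Function.onFun Disjoint A) ∧ (∀ j, 0 < μ (A j)) ∧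
      ∀ φ : E → ℝ, φ 0 = 0 → ∃ g ∈ Submodule.span ℝ
        (Set.range fun j ↦ indicatorConstLp p (hA j) (hμA j) (1 : ℝ)), g =ᵐ[μ] φ ∘ T := by
  classical
  set V := T.range.filter fun v ↦ v ≠ 0 ∧ μ (T ⁻¹' {v}) ≠ 0
  set v : Fin V.card → E := fun j ↦ V.equivFin.symm j
  have hvV : ∀ j, v j ≠ 0 ∧ μ (T ⁻¹' {v j}) ≠ 0 := fun j ↦
    (Finset.mem_filter.mp (V.equivFin.symm j).2).2
  have hA : ∀ j, MeasurableSet (T ⁻¹' {v j}) := fun j ↦ T.measurableSet_fiber _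
  have hμA : ∀ j, μ (T ⁻¹' {v j}) ≠ ∞ := fun j ↦
    (T.measure_preimage_lt_top_of_memLp hp0 hp hT _ (hvV j).1).ne
  have hd : Pairwise (Function.onFun Disjoint fun j ↦ T ⁻¹' {v j}) := fun j k hjk ↦
    (Set.disjoint_singleton.mpr fun h ↦ hjk (V.equivFin.symm.injective (Subtype.ext h))).preimage T
  refine ⟨V.card, fun j ↦ T ⁻¹' {v j}, hA, hμA, hd, fun j ↦ pos_iff_ne_zero.mpr (hvV j).2,
    fun φ hφ ↦ ⟨∑ j, φ (v j) • indicatorConstLp p (hA j) (hμA j) (1 : ℝ),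
      Submodule.sum_mem _ fun j _ ↦ Submodule.smul_mem _ _ (Submodule.subset_span ⟨j, rfl⟩), ?_⟩⟩
  filter_upwards [coeFn_sum_smul_indicatorConstLp hA hμA fun j ↦ φ (v j),
    T.ae_measure_preimage_singleton_ne_zero] with x hx hxnull
  rw [hx, Function.comp_apply]
  by_cases hTx : T x = 0
  · rw [hTx, hφ]
    exact Finset.sum_eq_zero fun j _ ↦
      Set.indicator_of_notMem (fun hxj ↦ (hvV j).1 (hxj.symm.trans hTx)) _
  · set k := V.equivFin ⟨T x, Finset.mem_filter.mpr ⟨T.mem_range_self x, hTx, hxnull⟩⟩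
    have hvk : v k = T x := by simp [v, k]
    exact (hd.sum_indicator_apply_of_mem _ (hvk.symm : T x = v k)).trans (congrArg φ hvk)

end SimpleFunc

theorem Lp.norm_sub_le_eLpNorm_pi_sub {ι : Type*} [Fintype ι] (f : ι → Lp ℝ p μ)
    (T : α → ι → ℝ) (hT : eLpNorm ((fun x i ↦ f i x) - T) p μ ≠ ∞) (i : ι) {g : Lp ℝ p μ}
    (hg : g =ᵐ[μ] fun x ↦ T x i) :
    ‖f i - g‖ ≤ (eLpNorm ((fun x i ↦ f i x) - T) p μ).toReal := by
  rw [Lp.norm_def]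
  refine ENNReal.toReal_mono hT (eLpNorm_mono_ae ?_)
  filter_upwards [Lp.coeFn_sub (f i) g, hg] with x hsub hgx
  rw [hsub, Pi.sub_apply, hgx]
  exact norm_le_pi_norm (fun j ↦ f j x - T x j) i

end MeasureTheory

open MeasureTheory

/-- For `1 ≤ p < ∞` and any measure `μ`, the space `L_p(μ)` has the metric
π-property, witnessed explicitly: for every `ε > 0` and unit vectors `f₁, …, fₙ` there are
finitely many pairwise disjoint measurable sets `A₁, …, A_m` of finite positive measure such
that the conditional-expectation-type operator
`P(f) = ∑ⱼ (1/μ(Aⱼ)) (∫_{Aⱼ} f dμ) χ_{Aⱼ}` is a norm-one projection onto the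
finite dimensional subspace `M = span {χ_{A₁}, …, χ_{A_m}}`, and each `fᵢ` is within `ε`
of some element of `M`. -/
theorem Lp_metricPiProperty
    {α : Type*} [MeasurableSpace α] (μ : Measure α)
    (p : ℝ≥0∞) [hp : Fact (1 ≤ p)] (hp' : p ≠ ∞)
    (ε : ℝ) (hε : 0 < ε) (n : ℕ) (hn : 0 < n)
    (f : Fin n → Lp ℝ p μ) (hf : ∀ i, ‖f i‖ = 1) :
    ∃ (m : ℕ) (_ : 0 < m) (A : Fin m → Set α) (hA : ∀ j, MeasurableSet (A j))
      (hμA : ∀ j, μ (A j) ≠ ∞),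
      Pairwise (Function.onFun Disjoint A) ∧
      (∀ j, 0 < μ (A j)) ∧
      ∃ P : Lp ℝ p μ →L[ℝ] Lp ℝ p μ,
        (∀ g : Lp ℝ p μ, P g = ∑ j, (((μ (A j)).toReal)⁻¹ * ∫ x in A j, g x ∂μ) •
            indicatorConstLp p (hA j) (hμA j) (1 : ℝ)) ∧
        IsIdempotentElem P ∧ ‖P‖ = 1 ∧
        LinearMap.range (P : Lp ℝ p μ →ₗ[ℝ] Lp ℝ p μ) =
          Submodule.span ℝ (Set.range fun j => indicatorConstLp p (hA j) (hμA j) (1 : ℝ)) ∧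
        ∀ i, ∃ g ∈ Submodule.span ℝ
            (Set.range fun j => indicatorConstLp p (hA j) (hμA j) (1 : ℝ)),
          ‖f i - g‖ < ε := by
  have hp0 : p ≠ 0 := (zero_lt_one.trans_le hp.out).ne'
  -- approximating within `1` rather than `ε` forces `m > 0`, the `f i` being unit vectors
  have hδ : 0 < min ε 1 := lt_min hε one_pos
  obtain ⟨T, hFT, hT⟩ := (memLp_pi_iff.mpr fun i ↦ Lp.memLp (f i)).exists_simpleFunc_eLpNorm_sub_lt
    hp' (ENNReal.ofReal_pos.mpr hδ).ne'
  obtain ⟨m, A, hA, hμA, hd, hpos, hspan⟩ :=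
    T.exists_ae_eq_comp_mem_span_indicatorConstLp hT hp0 hp'
  have happrox : ∀ i, ∃ g ∈ Submodule.span ℝ
      (Set.range fun j ↦ indicatorConstLp p (hA j) (hμA j) (1 : ℝ)), ‖f i - g‖ < min ε 1 := by
    intro i
    obtain ⟨g, hg, hgT⟩ := hspan (fun v ↦ v i) rfl
    refine ⟨g, hg, (Lp.norm_sub_le_eLpNorm_pi_sub f T hFT.ne_top i hgT).trans_lt ?_⟩
    exact ENNReal.toReal_lt_of_lt_ofReal hFT
  obtain ⟨g₀, hg₀, hlt₀⟩ := happrox ⟨0, hn⟩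
  have hm : 0 < m := pos_of_norm_sub_lt_one_of_mem_span_range (hf _) hg₀
    (hlt₀.trans_le (min_le_right ε 1))
  have h0 : ∀ j, μ (A j) ≠ 0 := fun j ↦ (hpos j).ne'
  have : Nonempty (Fin m) := ⟨⟨0, hm⟩⟩
  refine ⟨m, hm, A, hA, hμA, hd, hpos, Lp.averaging hA hμA hp' hd, fun g ↦ ?_,
    Lp.isIdempotentElem_averaging hA hμA hp' hd h0, Lp.norm_averaging hA hμA hp' hd h0,
    Lp.range_averaging hA hμA hp' hd h0,
    fun i ↦ (happrox i).imp fun g hg ↦ ⟨hg.1, hg.2.trans_le (min_le_left ε 1)⟩⟩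
  simp only [Lp.averaging_apply, setAverage_eq, smul_eq_mul, Measure.real]
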